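/- arXiv:2008.05220 — 2 statements merged into one kernel-verified Lean document; each statement's English description precedes it below -/
import Mathlib

section
/- Let P be a scale group acting on T_{q+1} and let c be a P-labelling with distinguished bi-infinite path (v_n)_{n∈ℤ}. Then there exists a bijection φ of the vertex set with φ(v⁺) = (φ(v))⁺ for all vertices v (so φ ∈ Isom(T_{q+1})_ω), with φ(v_n) = ṽ_n for all n ∈ ℤ, and carrying c to the standard labelling: for every vertex v and every child w of v, φ(w) = φ(v)j where j = c_v(v,w). Moreover P′ := φPφ⁻¹ is a scale group and the standard labelling is a P′-labelling. -/
namespace Scale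

/-- A vertex of the `(q+1)`-regular tree `T_{q+1}`: a level `n ∈ ℤ` together with a
labelling `ℤ → Fin q` which vanishes above the level and for all sufficiently small indices. -/
@[ext] structure Vertex (q : ℕ) where
  level : ℤ
  lab : ℤ → Fin q
  zero_gt : ∀ i : ℤ, level < i → (lab i : ℕ) = 0
  bdd : ∃ N : ℤ, ∀ i : ℤ, i < N → (lab i : ℕ) = 0

namespace Vertex

variable {q : ℕ} [NeZero q]

/-- The parent `v⁺` of a vertex. -/
def parent (v : Vertex q) : Vertex q where
  level := v.level - 1
  lab := fun i => if v.level - 1 < i then 0 else v.lab i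
  zero_gt := by intro i hi; simp [hi]
  bdd := by
    obtain ⟨N, hN⟩ := v.bdd
    refine ⟨N, fun i hi => ?_⟩
    by_cases h : v.level - 1 < i
    · simp [h]
    · simp [h, hN i hi]

/-- The child `vj` of a vertex `v`. -/
def child (v : Vertex q) (j : Fin q) : Vertex q where
  level := v.level + 1
  lab := fun i => if i = v.level + 1 then j else v.lab i
  zero_gt := by
    intro i hi
    have h1 : i ≠ v.level + 1 := by omega
    simp [h1, v.zero_gt i (by omega)]
  bdd := by
    obtain ⟨N, hN⟩ := v.bdd
    refine ⟨min N (v.level + 1), fun i hi => ?_⟩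
    have h1 : i < N := lt_of_lt_of_le hi (min_le_left _ _)
    have h2 : i < v.level + 1 := lt_of_lt_of_le hi (min_le_right _ _)
    have h3 : i ≠ v.level + 1 := by omega
    simp [h3, hN i h1]

/-- The restriction `w|_m` of a vertex to level `m`. -/
def trunc (v : Vertex q) (m : ℤ) : Vertex q where
  level := m
  lab := fun i => if m < i then 0 else v.lab i
  zero_gt := by intro i hi; simp [hi]
  bdd := by
    obtain ⟨N, hN⟩ := v.bdd
    refine ⟨N, fun i hi => ?_⟩
    by_cases h : m < i
    · simp [h]
    · simp [h, hN i hi]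

/-- `w` is a descendant of `u` (in the rooted subtree `T_u`). -/
def Descendant (u w : Vertex q) : Prop := u.level ≤ w.level ∧ trunc w u.level = u

end Vertex

/-- The all-zero vertex `ṽ_n` at level `n`. -/
def zeroVtx (q : ℕ) [NeZero q] (n : ℤ) : Vertex q where
  level := n
  lab := fun _ => 0
  zero_gt := by intro i _; simp
  bdd := ⟨0, by intro i _; simp⟩

/-- The map shifting all labels by `k` (a translation towards the end `ω` when `k > 0`). -/
def shiftMap {q : ℕ} (k : ℤ) (v : Vertex q) : Vertex q where
  level := v.level + k
  lab := fun i => v.lab (i - k)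
  zero_gt := fun i hi => v.zero_gt (i - k) (by omega)
  bdd := by
    obtain ⟨N, hN⟩ := v.bdd
    exact ⟨N + k, fun i hi => hN (i - k) (by omega)⟩

/-- The translation `x̃₀ᵏ` of `T_{q+1}` as a permutation of the vertices. -/
def shiftPerm (q : ℕ) (k : ℤ) : Equiv.Perm (Vertex q) where
  toFun := shiftMap k
  invFun := shiftMap (-k)
  left_inv := by
    intro v
    refine Vertex.ext ?_ ?_
    · show v.level + k + -k = v.level
      omega
    · funext i
      show v.lab (i - -k - k) = v.lab i
      congr 1
      omega
  right_inv := by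
    intro v
    refine Vertex.ext ?_ ?_
    · show v.level + -k + k = v.level
      omega
    · funext i
      show v.lab (i - k - -k) = v.lab i
      congr 1
      omega

/-- The group `Isom(T_{q+1})_ω` of tree automorphisms fixing the distinguished end `ω`,
realised as the subgroup of permutations of the vertex set commuting with `parent`. -/
def IsomOmega (q : ℕ) [NeZero q] : Subgroup (Equiv.Perm (Vertex q)) where
  carrier := {x | ∀ v : Vertex q, x (Vertex.parent v) = Vertex.parent (x v)}
  one_mem' := fun _ => rfl
  mul_mem' := by
    intro a b ha hb v
    show (a * b) (Vertex.parent v) = Vertex.parent ((a * b) v)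
    rw [Equiv.Perm.mul_apply, Equiv.Perm.mul_apply, hb, ha]
  inv_mem' := by
    intro a ha v
    show a⁻¹ (Vertex.parent v) = Vertex.parent (a⁻¹ v)
    have h := ha (a⁻¹ v)
    rw [show ∀ x, a (a⁻¹ x) = x from a.apply_symm_apply] at h
    rw [← h, show ∀ x, a⁻¹ (a x) = x from a.symm_apply_apply]

/-- The level shift `n(x)` of an automorphism (evaluated at the zero vertex; for members
of `IsomOmega q` the shift is the same at every vertex). -/
def lshift {q : ℕ} [NeZero q] (x : Equiv.Perm (Vertex q)) : ℤ := (x (zeroVtx q 0)).level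

/-- An automorphism is elliptic if it fixes a vertex. -/
def Elliptic {q : ℕ} (x : Equiv.Perm (Vertex q)) : Prop := ∃ v : Vertex q, x v = v

/-- Topology of pointwise convergence on `X → X` for `X` discrete. -/
def funTop (X : Type*) : TopologicalSpace (X → X) :=
  @Pi.topologicalSpace X (fun _ => X) (fun _ => ⊥)

/-- The permutation topology on `Equiv.Perm X`: pointwise stabilisers of finite sets of
points form a neighbourhood basis of the identity. -/
def permTop (X : Type*) : TopologicalSpace (Equiv.Perm X) :=
  @TopologicalSpace.induced (Equiv.Perm X) ((X → X) × (X → X))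
    (fun g => ((g : X → X), ((g⁻¹ : Equiv.Perm X) : X → X)))
    (@instTopologicalSpaceProd _ _ (funTop X) (funTop X))

instance (q : ℕ) : TopologicalSpace (Equiv.Perm (Vertex q)) := permTop _

instance (q : ℕ) : TopologicalSpace (Equiv.Perm (List (Fin q))) := permTop _

/-- A scale group: a closed subgroup of `Isom(T_{q+1})_ω` acting transitively on vertices. -/
def IsScaleGroup {q : ℕ} [NeZero q] (P : Subgroup (Equiv.Perm (Vertex q))) : Prop :=
  P ≤ IsomOmega q ∧ IsClosed (P : Set (Equiv.Perm (Vertex q))) ∧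
    ∀ v w : Vertex q, ∃ x ∈ P, x v = w

/-- The stabiliser of the vertex `v` in `P`, as a subgroup of the ambient permutation group. -/
def stabIn {q : ℕ} (P : Subgroup (Equiv.Perm (Vertex q))) (v : Vertex q) :
    Subgroup (Equiv.Perm (Vertex q)) where
  carrier := {g | g ∈ P ∧ g v = v}
  one_mem' := ⟨P.one_mem, rfl⟩
  mul_mem' := by
    intro a b ha hb
    exact ⟨P.mul_mem ha.1 hb.1, by rw [Equiv.Perm.mul_apply, hb.2, ha.2]⟩
  inv_mem' := by
    intro a ha
    refine ⟨P.inv_mem ha.1, ?_⟩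
    rw [Equiv.Perm.inv_eq_iff_eq]
    exact ha.2.symm

/-- The conjugate subgroup `xVx⁻¹`. -/
def conjSub {G : Type*} [Group G] (x : G) (V : Subgroup G) : Subgroup G :=
  V.map (MulAut.conj x).toMonoidHom

/-- The vertex `ξ|_m` on the ray towards the end represented by `ξ`. -/
def ray (q : ℕ) [NeZero q] (ξ : ℤ → Fin q) (N : ℤ) (hξ : ∀ i : ℤ, i < N → (ξ i : ℕ) = 0)
    (m : ℤ) : Vertex q where
  level := m
  lab := fun i => if m < i then 0 else ξ i
  zero_gt := by intro i hi; simp [hi]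
  bdd := by
    refine ⟨N, fun i hi => ?_⟩
    by_cases h : m < i
    · simp [h]
    · simp [h, hξ i hi]

/-- The contraction group of `x` in `P`. -/
def conSet {q : ℕ} (P : Subgroup (Equiv.Perm (Vertex q))) (x : Equiv.Perm (Vertex q)) :
    Set (Equiv.Perm (Vertex q)) :=
  {g | g ∈ P ∧ ∀ v : Vertex q, ∃ N : ℕ, ∀ n : ℕ, N ≤ n → (x ^ n * g * (x ^ n)⁻¹) v = v}


/-- `c` is a `P`-labelling of `T_{q+1}` with distinguished bi-infinite path `vp`:
each `c v` is a bijection from the directed edges out of `v` (encoded as the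
neighbours of `v`) to `{0, …, q}`; the edge towards the parent is labelled `q`;
along the path `vp` the downward edges are labelled `0`; and `P` contains, for
all `u₁, u₂`, an element carrying `u₁` to `u₂` and preserving the labels on the
rooted subtree of descendants of `u₁`. -/
def IsPLabelling {q : ℕ} [NeZero q] (P : Subgroup (Equiv.Perm (Vertex q)))
    (c : Vertex q → Vertex q → Fin (q + 1)) (vp : ℤ → Vertex q) : Prop :=
  (∀ v : Vertex q, ∀ j : Fin (q + 1),
      ∃! w : Vertex q, (Vertex.parent w = v ∨ w = Vertex.parent v) ∧ c v w = j) ∧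
  (∀ v : Vertex q, (c v (Vertex.parent v) : ℕ) = q) ∧
  (∀ n : ℤ, Vertex.parent (vp (n + 1)) = vp n) ∧
  (∀ n : ℤ, (c (vp n) (vp (n + 1)) : ℕ) = 0) ∧
  (∀ u₁ u₂ : Vertex q, ∃ x, x ∈ P ∧ x u₁ = u₂ ∧
    ∀ w w' : Vertex q, Vertex.Descendant u₁ w → Vertex.Descendant u₁ w' →
      (Vertex.parent w = w' ∨ Vertex.parent w' = w) → c (x w) (x w') = c w w')

open Classical in
/-- The standard labelling of `T_{q+1}`: the edge from `v` to its child `vj` is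
labelled `j` and the edge towards the parent is labelled `q`. -/
noncomputable def stdLabel (q : ℕ) [NeZero q] : Vertex q → Vertex q → Fin (q + 1) :=
  fun v w =>
    if Vertex.parent w = v then Fin.castLE (Nat.le_succ q) (w.lab (v.level + 1))
    else Fin.last q

/-- Convert an edge label in `{0,…,q}` known to be `< q` into a letter in `{0,…,q-1}`. -/
def toFinQ {q : ℕ} [NeZero q] (j : Fin (q + 1)) : Fin q :=
  if h : (j : ℕ) < q then ⟨j, h⟩ else ⟨0, Nat.pos_of_ne_zero (NeZero.ne q)⟩

/-- The string of labels read along the downward path of length `d` ending at `w`. -/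
def labelString {q : ℕ} [NeZero q] (c : Vertex q → Vertex q → Fin (q + 1)) :
    Vertex q → ℕ → List (Fin q)
  | _, 0 => []
  | w, (d + 1) => labelString c (Vertex.parent w) d ++ [toFinQ (c (Vertex.parent w) w)]

/-- The isomorphism `φ^c_v : T_v → T_{q,q}` given by a labelling `c`: a descendant `w`
of `v` is sent to the string of labels along the path from `v` down to `w`. -/
def phiStr {q : ℕ} [NeZero q] (c : Vertex q → Vertex q → Fin (q + 1)) (v w : Vertex q) :
    List (Fin q) :=
  labelString c w ((w.level - v.level).toNat)

/-- The set `P|_v = {φ^c_{x(v)} ∘ x ∘ (φ^c_v)⁻¹ : x ∈ P}` of sections of elements of `P`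
at the vertex `v`, with respect to the labelling `c`. -/
def sectSet {q : ℕ} [NeZero q] (P : Subgroup (Equiv.Perm (Vertex q)))
    (c : Vertex q → Vertex q → Fin (q + 1)) (v : Vertex q) :
    Set (Equiv.Perm (List (Fin q))) :=
  {g | ∃ x, x ∈ P ∧ ∀ w : Vertex q, Vertex.Descendant v w →
        g (phiStr c v w) = phiStr c (x v) (x w)}

/-- The standard isomorphism `φ_v : T_v → T_{q,q}`: a descendant `w` of `v` of level `m`
is sent to the string `(w_{n+1}, …, w_m)` where `n` is the level of `v`. -/
def stdStr {q : ℕ} (v w : Vertex q) : List (Fin q) :=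
  (List.range (w.level - v.level).toNat).map fun k => w.lab (v.level + 1 + k)

/-- The set `{φ_{x(v)} ∘ x ∘ φ_v⁻¹ : x ∈ P}` with respect to the standard isomorphisms. -/
def stdSect {q : ℕ} [NeZero q] (P : Subgroup (Equiv.Perm (Vertex q))) (v : Vertex q) :
    Set (Equiv.Perm (List (Fin q))) :=
  {g | ∃ x, x ∈ P ∧ ∀ w : Vertex q, Vertex.Descendant v w →
        g (stdStr v w) = stdStr (x v) (x w)}

/-- `Isom(T_{q,q})`: the group of permutations of the set of finite strings over
`{0,…,q-1}` preserving length and the prefix relation. -/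
def RIsom (q : ℕ) : Subgroup (Equiv.Perm (List (Fin q))) where
  carrier := {g | (∀ l : List (Fin q), (g l).length = l.length) ∧
    ∀ l₁ l₂ : List (Fin q), l₁ <+: l₂ → g l₁ <+: g l₂}
  one_mem' := ⟨fun _ => rfl, fun _ _ h => h⟩
  mul_mem' := by
    intro a b ha hb
    constructor
    · intro l
      rw [Equiv.Perm.mul_apply, ha.1, hb.1]
    · intro l₁ l₂ h
      rw [Equiv.Perm.mul_apply, Equiv.Perm.mul_apply]
      exact ha.2 _ _ (hb.2 _ _ h)
  inv_mem' := by
    intro a ha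
    have hlen : ∀ l : List (Fin q), (a⁻¹ l).length = l.length := by
      intro l
      have h := ha.1 (a⁻¹ l)
      rw [show ∀ x, a (a⁻¹ x) = x from a.apply_symm_apply] at h
      exact h.symm
    refine ⟨hlen, ?_⟩
    intro l₁ l₂ h
    have htake : List.take (a⁻¹ l₁).length (a⁻¹ l₂) <+: a⁻¹ l₂ := List.take_prefix _ _
    have h2 : a (List.take (a⁻¹ l₁).length (a⁻¹ l₂)) <+: a (a⁻¹ l₂) := ha.2 _ _ htake
    rw [show ∀ x, a (a⁻¹ x) = x from a.apply_symm_apply] at h2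
    have hle : l₁.length ≤ l₂.length := h.length_le
    have hlen3 : (a (List.take (a⁻¹ l₁).length (a⁻¹ l₂))).length = l₁.length := by
      rw [ha.1, List.length_take, hlen, hlen]
      omega
    have hpre : a (List.take (a⁻¹ l₁).length (a⁻¹ l₂)) <+: l₁ :=
      List.prefix_of_prefix_length_le h2 h (le_of_eq hlen3)
    have heq : a (List.take (a⁻¹ l₁).length (a⁻¹ l₂)) = l₁ := hpre.eq_of_length hlen3
    have heq2 : List.take (a⁻¹ l₁).length (a⁻¹ l₂) = a⁻¹ l₁ := by
      apply a.injective
      rw [heq, show ∀ x, a (a⁻¹ x) = x from a.apply_symm_apply]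
    rw [← heq2]
    exact List.take_prefix _ _

/-- A subgroup of `Isom(T_{q,q})` is self-replicating if it is self-similar, transitive
on level 1, and all the section homomorphisms `g ↦ g|_w` are surjective. -/
def SelfReplicating {q : ℕ} (G : Subgroup (Equiv.Perm (List (Fin q)))) : Prop :=
  (∀ w : List (Fin q), ∀ g, g ∈ G → g w = w →
      ∃ g', g' ∈ G ∧ ∀ v : List (Fin q), g (w ++ v) = w ++ g' v) ∧
  (∀ j j' : Fin q, ∃ g ∈ G, g [j] = [j']) ∧
  (∀ w : List (Fin q), ∀ g', g' ∈ G →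
      ∃ g, g ∈ G ∧ g w = w ∧ ∀ v : List (Fin q), g (w ++ v) = w ++ g' v)

/-- The stabiliser of the string `w` in `G ≤ Isom(T_{q,q})`, as a subgroup of `G`. -/
def rstab {q : ℕ} (G : Subgroup (Equiv.Perm (List (Fin q)))) (w : List (Fin q)) :
    Subgroup G where
  carrier := {g | (g : Equiv.Perm (List (Fin q))) w = w}
  one_mem' := rfl
  mul_mem' := by
    intro a b ha hb
    show ((a * b : G) : Equiv.Perm (List (Fin q))) w = w
    rw [Subgroup.coe_mul, Equiv.Perm.mul_apply]
    rw [show (b : Equiv.Perm (List (Fin q))) w = w from hb,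
      show (a : Equiv.Perm (List (Fin q))) w = w from ha]
  inv_mem' := by
    intro a ha
    show ((a⁻¹ : G) : Equiv.Perm (List (Fin q))) w = w
    rw [Subgroup.coe_inv, Equiv.Perm.inv_eq_iff_eq]
    exact (show (a : Equiv.Perm (List (Fin q))) w = w from ha).symm


end Scale

/-!
The map `φ` reads off coordinates from the labelling: the letter of `φ w` at level `i` is the
`c`-label of the edge entering the ancestor of `w` at level `i` (up to the level shift that puts
the distinguished path on the zero path). It commutes with `parent`, and since each `c_v` is a
bijection it maps the children of `v` bijectively onto the children of `φ v`; as any two vertices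
of the same level have a common ancestor and every vertex has an ancestor on the distinguished
path, `φ` is a bijection. By construction the standard labelling is the image of `c` under `φ`,
so every axiom of a `P`-labelling, as well as closedness and transitivity of `P`, is transported
to `φPφ⁻¹` by conjugation.
-/

namespace Scale

open Function Set Topology Vertex

variable {q : ℕ}

namespace Vertex

@[simp] lemma level_child (v : Vertex q) (j : Fin q) : (v.child j).level = v.level + 1 := rfl

lemma child_lab_level_add_one (v : Vertex q) (j : Fin q) : (v.child j).lab (v.level + 1) = j := by
  simp [child]

lemma child_injective (v : Vertex q) : Injective v.child := fun j j' h => by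
  simpa [child_lab_level_add_one] using congrArg (fun w => w.lab (v.level + 1)) h

variable [NeZero q]

lemma lab_eq_zero_of_level_lt {v : Vertex q} {i : ℤ} (h : v.level < i) : v.lab i = 0 :=
  Fin.ext (by simpa using v.zero_gt i h)

@[simp] lemma level_parent (v : Vertex q) : v.parent.level = v.level - 1 := rfl

@[simp] lemma level_trunc (v : Vertex q) (m : ℤ) : (v.trunc m).level = m := rfl

lemma level_eq_of_parent_eq {v w : Vertex q} (h : w.parent = v) : w.level = v.level + 1 := by
  rw [← h, level_parent]; ring

lemma trunc_level (v : Vertex q) : v.trunc v.level = v := by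
  refine Vertex.ext rfl (funext fun i => ?_)
  have : v.level < i → v.lab i = 0 := lab_eq_zero_of_level_lt
  simp only [trunc]
  grind

lemma parent_trunc (v : Vertex q) (m : ℤ) : (v.trunc m).parent = v.trunc (m - 1) := by
  refine Vertex.ext rfl (funext fun i => ?_)
  simp only [parent, trunc]
  grind

lemma trunc_parent (v : Vertex q) {m : ℤ} (h : m < v.level) : v.parent.trunc m = v.trunc m := by
  refine Vertex.ext rfl (funext fun i => ?_)
  simp only [parent, trunc]
  grind

lemma iterate_parent_eq_trunc (v : Vertex q) (d : ℕ) : parent^[d] v = v.trunc (v.level - d) := by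
  induction d with
  | zero => simp [trunc_level]
  | succ d ih =>
    rw [iterate_succ_apply', ih, parent_trunc]
    congr 1
    push_cast
    ring

lemma level_iterate_parent (v : Vertex q) (d : ℕ) : (parent^[d] v).level = v.level - d := by
  rw [iterate_parent_eq_trunc, level_trunc]

lemma trunc_level_sub_one (v : Vertex q) : v.trunc (v.level - 1) = v.parent := by
  rw [← parent_trunc, trunc_level]

lemma lab_parent (v : Vertex q) (i : ℤ) :
    v.parent.lab i = if v.level - 1 < i then 0 else v.lab i := rfl

lemma exists_trunc_eq_zeroVtx (v : Vertex q) : ∃ N : ℤ, ∀ m ≤ N, v.trunc m = zeroVtx q m := by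
  obtain ⟨N, hN⟩ := v.bdd
  refine ⟨N - 1, fun m hm => Vertex.ext rfl (funext fun i => ?_)⟩
  have : i < N → v.lab i = 0 := fun h => Fin.ext (by simpa using hN i h)
  simp only [trunc, zeroVtx]
  grind

lemma exists_iterate_parent_eq (v w : Vertex q) (h : v.level = w.level) :
    ∃ d : ℕ, parent^[d] v = parent^[d] w := by
  obtain ⟨M, hM⟩ := exists_trunc_eq_zeroVtx v
  obtain ⟨N, hN⟩ := exists_trunc_eq_zeroVtx w
  refine ⟨(v.level - min (min M N) v.level).toNat, ?_⟩
  rw [iterate_parent_eq_trunc, iterate_parent_eq_trunc, ← h, Int.toNat_of_nonneg (by omega),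
    sub_sub_cancel, hM _ (by omega), hN _ (by omega)]

lemma descendant_iff_exists_iterate_parent {u w : Vertex q} :
    Descendant u w ↔ ∃ d : ℕ, parent^[d] w = u := by
  constructor
  · rintro ⟨hle, htrunc⟩
    refine ⟨(w.level - u.level).toNat, ?_⟩
    rwa [iterate_parent_eq_trunc, Int.toNat_of_nonneg (by omega), sub_sub_cancel]
  · rintro ⟨d, rfl⟩
    rw [iterate_parent_eq_trunc]
    exact ⟨by simp, by simp⟩

lemma parent_child (v : Vertex q) (j : Fin q) : (v.child j).parent = v := by
  refine Vertex.ext (by simp) (funext fun i => ?_)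
  have : v.level < i → v.lab i = 0 := lab_eq_zero_of_level_lt
  simp only [parent, child]
  grind

lemma eq_child_of_parent_eq {v w : Vertex q} (h : w.parent = v) :
    w = v.child (w.lab (v.level + 1)) := by
  have hlevel := level_eq_of_parent_eq h
  refine Vertex.ext (by simpa using hlevel) (funext fun i => ?_)
  have : w.level < i → w.lab i = 0 := lab_eq_zero_of_level_lt
  subst h
  simp only [parent, child]
  grind

end Vertex

variable [NeZero q]

lemma mem_range_of_iterate_parent_mem_range {f : Vertex q → Vertex q}
    (hsurj : ∀ v u, u.parent = f v → ∃ w, w.parent = v ∧ f w = u) :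
    ∀ (d : ℕ) (u : Vertex q), parent^[d] u ∈ range f → u ∈ range f
  | 0, _, h => h
  | d + 1, u, h => by
    rw [iterate_succ_apply] at h
    obtain ⟨v, hv⟩ := mem_range_of_iterate_parent_mem_range hsurj d u.parent h
    obtain ⟨w, -, rfl⟩ := hsurj v u hv.symm
    exact mem_range_self w

section ParentSemiconj

variable {f : Vertex q → Vertex q} (hf : Semiconj f parent parent)
include hf

lemma eq_of_iterate_parent_eq_of_apply_eq
    (hinj : ∀ v w w', w.parent = v → w'.parent = v → f w = f w' → w = w') :
    ∀ (d : ℕ) {w w' : Vertex q}, parent^[d] w = parent^[d] w' → f w = f w' → w = w'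
  | 0, _, _, h, _ => h
  | d + 1, w, w', h, hfw => by
    rw [iterate_succ_apply, iterate_succ_apply] at h
    have : w.parent = w'.parent :=
      eq_of_iterate_parent_eq_of_apply_eq hinj d h (by rw [hf, hf, hfw])
    exact hinj _ w w' rfl this.symm hfw

lemma bijective_of_semiconj_parent {t : ℤ} (hlevel : ∀ v, (f v).level = v.level + t)
    (hinj : ∀ v w w', w.parent = v → w'.parent = v → f w = f w' → w = w')
    (hsurj : ∀ v u, u.parent = f v → ∃ w, w.parent = v ∧ f w = u)
    (hray : ∀ u, ∃ d : ℕ, parent^[d] u ∈ range f) : Bijective f := by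
  refine ⟨fun w w' h => ?_, fun u => ?_⟩
  · have hlevel_eq : w.level = w'.level := by
      have := congrArg level h
      rw [hlevel, hlevel] at this
      omega
    obtain ⟨d, hd⟩ := exists_iterate_parent_eq w w' hlevel_eq
    exact eq_of_iterate_parent_eq_of_apply_eq hf hinj d hd h
  · obtain ⟨d, hd⟩ := hray u
    exact mem_range_of_iterate_parent_mem_range hsurj d u hd

end ParentSemiconj

namespace IsomOmega

variable {x : Equiv.Perm (Vertex q)} (hx : x ∈ IsomOmega q)
include hx

lemma apply_parent (v : Vertex q) : x v.parent = (x v).parent := hx v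

lemma apply_iterate_parent (d : ℕ) (v : Vertex q) : x (parent^[d] v) = parent^[d] (x v) :=
  Semiconj.iterate_right (f := x) hx d v

lemma parent_apply_eq_apply_iff {v w : Vertex q} : (x w).parent = x v ↔ w.parent = v := by
  rw [← apply_parent hx, x.injective.eq_iff]

lemma apply_eq_parent_apply_iff {v w : Vertex q} : x w = (x v).parent ↔ w = v.parent := by
  rw [← apply_parent hx, x.injective.eq_iff]

lemma descendant_apply {u w : Vertex q} (h : Descendant u w) : Descendant (x u) (x w) := by
  obtain ⟨d, rfl⟩ := descendant_iff_exists_iterate_parent.mp h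
  exact descendant_iff_exists_iterate_parent.mpr ⟨d, (apply_iterate_parent hx d w).symm⟩

end IsomOmega

lemma mem_map_conj_iff {G : Type*} [Group G] {H : Subgroup G} {g x : G} :
    x ∈ H.map (MulAut.conj g).toMonoidHom ↔ g⁻¹ * x * g ∈ H := by
  rw [Subgroup.mem_map_equiv, MulAut.conj_symm_apply]

lemma conj_mem_map_conj {G : Type*} [Group G] {H : Subgroup G} {g x : G} (hx : x ∈ H) :
    g * x * g⁻¹ ∈ H.map (MulAut.conj g).toMonoidHom :=
  mem_map_conj_iff.mpr (by simpa [mul_assoc] using hx)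

lemma continuous_conj_permTop {X : Type*} (φ : Equiv.Perm X) :
    Continuous[permTop X, permTop X] fun g => φ⁻¹ * g * φ := by
  let _ : TopologicalSpace X := ⊥
  have _ : DiscreteTopology X := ⟨rfl⟩
  let _ := permTop X
  have hpair : Continuous fun g : Equiv.Perm X => ((g : X → X), ((g⁻¹ : Equiv.Perm X) : X → X)) :=
    continuous_induced_dom
  have hconj : Continuous fun f : X → X => (φ⁻¹ : Equiv.Perm X) ∘ f ∘ φ :=
    continuous_pi fun x => continuous_of_discreteTopology.comp (continuous_apply (φ x))
  refine continuous_induced_rng.mpr ?_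
  exact ((hconj.comp continuous_fst).prodMk (hconj.comp continuous_snd)).comp hpair

lemma isClosed_map_conj_permTop {X : Type*} {P : Subgroup (Equiv.Perm X)} (φ : Equiv.Perm X)
    (hP : IsClosed[permTop X] (P : Set (Equiv.Perm X))) :
    IsClosed[permTop X] (P.map (MulAut.conj φ).toMonoidHom : Set (Equiv.Perm X)) := by
  have : (P.map (MulAut.conj φ).toMonoidHom : Set (Equiv.Perm X)) =
      (fun g => φ⁻¹ * g * φ) ⁻¹' P := Set.ext fun _ => mem_map_conj_iff
  rw [this]
  let _ := permTop X
  exact hP.preimage (continuous_conj_permTop φ)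

lemma IsScaleGroup.map_conj {P : Subgroup (Equiv.Perm (Vertex q))} (hP : IsScaleGroup P)
    {φ : Equiv.Perm (Vertex q)} (hφ : φ ∈ IsomOmega q) :
    IsScaleGroup (P.map (MulAut.conj φ).toMonoidHom) := by
  obtain ⟨hPω, hPclosed, hPtrans⟩ := hP
  refine ⟨?_, isClosed_map_conj_permTop φ hPclosed, fun v w => ?_⟩
  · rintro _ ⟨x, hx, rfl⟩
    simpa using mul_mem (mul_mem hφ (hPω hx)) (inv_mem hφ)
  · obtain ⟨x, hx, hxv⟩ := hPtrans (φ⁻¹ v) (φ⁻¹ w)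
    refine ⟨φ * x * φ⁻¹, conj_mem_map_conj hx, ?_⟩
    rw [Equiv.Perm.mul_apply, Equiv.Perm.mul_apply, hxv]
    exact φ.apply_symm_apply w

lemma IsPLabelling.map_conj {P : Subgroup (Equiv.Perm (Vertex q))}
    {c c' : Vertex q → Vertex q → Fin (q + 1)} {vp : ℤ → Vertex q} (hc : IsPLabelling P c vp)
    (hPω : P ≤ IsomOmega q) {φ : Equiv.Perm (Vertex q)} (hφ : φ ∈ IsomOmega q)
    (hc' : ∀ v w, (w.parent = v ∨ w = v.parent) → c' (φ v) (φ w) = c v w) :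
    IsPLabelling (P.map (MulAut.conj φ).toMonoidHom) c' (fun n => φ (vp n)) := by
  obtain ⟨hunique, hup, hpath, hpath_label, hhom⟩ := hc
  have hadj : ∀ {x : Equiv.Perm (Vertex q)}, x ∈ IsomOmega q → ∀ v w,
      ((x w).parent = x v ∨ x w = (x v).parent) ↔ (w.parent = v ∨ w = v.parent) :=
    fun hx v w => by
      rw [IsomOmega.parent_apply_eq_apply_iff hx, IsomOmega.apply_eq_parent_apply_iff hx]
  refine ⟨fun v j => ?_, fun v => ?_, fun n => ?_, fun n => ?_, fun u₁ u₂ => ?_⟩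
  · obtain ⟨v, rfl⟩ := φ.surjective v
    refine (φ.existsUnique_congr fun w => ?_).mp (hunique v j)
    rw [hadj hφ]
    exact and_congr_right fun h => by rw [hc' v w h]
  · obtain ⟨v, rfl⟩ := φ.surjective v
    rw [← IsomOmega.apply_parent hφ, hc' v _ (Or.inr rfl), hup]
  · rw [← IsomOmega.apply_parent hφ, hpath]
  · rw [hc' _ _ (Or.inl (hpath n)), hpath_label]
  · obtain ⟨u₁, rfl⟩ := φ.surjective u₁
    obtain ⟨x, hxP, hxu, hxc⟩ := hhom u₁ (φ⁻¹ u₂)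
    have hx : x ∈ IsomOmega q := hPω hxP
    refine ⟨φ * x * φ⁻¹, conj_mem_map_conj hxP, ?_, fun w w' hw hw' hedge => ?_⟩
    · simp [Equiv.Perm.mul_apply, hxu]
    obtain ⟨w, rfl⟩ := φ.surjective w
    obtain ⟨w', rfl⟩ := φ.surjective w'
    have hdesc : ∀ {y}, Descendant (φ u₁) (φ y) → Descendant u₁ y := fun h => by
      simpa using IsomOmega.descendant_apply (inv_mem hφ) h
    have hadj' : w'.parent = w ∨ w' = w.parent := by
      rw [← hadj hφ]
      exact hedge.symm.imp_right Eq.symm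
    simp only [Equiv.Perm.mul_apply, Equiv.Perm.inv_def, Equiv.symm_apply_apply]
    rw [hc' _ _ ((hadj hx w w').mpr hadj'), hc' _ _ hadj']
    exact hxc w w' (hdesc hw) (hdesc hw') (hadj'.symm.imp_left Eq.symm)

lemma toFinQ_val {j : Fin (q + 1)} (h : (j : ℕ) < q) : (toFinQ j : ℕ) = j := by
  simp [toFinQ, h]

lemma toFinQ_eq_zero {j : Fin (q + 1)} (h : (j : ℕ) = 0) : toFinQ j = 0 :=
  Fin.ext (by simp [toFinQ_val (h ▸ NeZero.pos q), h])

lemma toFinQ_castLE (j : Fin q) : toFinQ (Fin.castLE (Nat.le_succ q) j) = j :=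
  Fin.ext (toFinQ_val (by simp))

lemma stdLabel_child (v : Vertex q) (j : Fin q) :
    stdLabel q v (v.child j) = Fin.castLE (Nat.le_succ q) j := by
  rw [stdLabel, if_pos (parent_child v j), child_lab_level_add_one]

lemma stdLabel_parent (v : Vertex q) : stdLabel q v v.parent = Fin.last q := by
  have : v.parent.parent ≠ v := fun h => by
    have := congrArg level h
    simp only [level_parent] at this
    omega
  rw [stdLabel, if_neg this]

namespace IsPLabelling

variable {P : Subgroup (Equiv.Perm (Vertex q))} {c : Vertex q → Vertex q → Fin (q + 1)}
  {vp : ℤ → Vertex q} (hc : IsPLabelling P c vp)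
include hc

lemma val_lt_of_parent_eq {v w : Vertex q} (h : w.parent = v) : (c v w : ℕ) < q := by
  refine lt_of_le_of_ne (Nat.lt_succ_iff.mp (c v w).isLt) fun hq => ?_
  have : w = v.parent :=
    (hc.1 v (c v w)).unique ⟨Or.inl h, rfl⟩ ⟨Or.inr rfl, Fin.ext (by rw [hc.2.1, hq])⟩
  have := congrArg level this
  rw [level_eq_of_parent_eq h, level_parent] at this
  omega

lemma eq_of_toFinQ_eq {v w w' : Vertex q} (hw : w.parent = v) (hw' : w'.parent = v)
    (h : toFinQ (c v w) = toFinQ (c v w')) : w = w' := by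
  have : c v w = c v w' := Fin.ext <| by
    rw [← toFinQ_val (hc.val_lt_of_parent_eq hw), ← toFinQ_val (hc.val_lt_of_parent_eq hw'), h]
  exact (hc.1 v (c v w)).unique ⟨Or.inl hw, rfl⟩ ⟨Or.inl hw', this.symm⟩

lemma exists_child_toFinQ_eq (v : Vertex q) (j : Fin q) :
    ∃ w, w.parent = v ∧ toFinQ (c v w) = j := by
  obtain ⟨w, ⟨hw | rfl, hcw⟩, -⟩ := hc.1 v (Fin.castLE (Nat.le_succ q) j)
  · exact ⟨w, hw, by rw [hcw, toFinQ_castLE]⟩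
  · have := hc.2.1 v
    rw [hcw, Fin.val_castLE] at this
    exact absurd this j.isLt.ne

lemma toFinQ_label_vp_sub_one (i : ℤ) : toFinQ (c (vp (i - 1)) (vp i)) = 0 :=
  toFinQ_eq_zero (by simpa using hc.2.2.2.1 (i - 1))

lemma iterate_parent_vp (d : ℕ) (n : ℤ) : parent^[d] (vp n) = vp (n - d) := by
  induction d with
  | zero => simp
  | succ d ih =>
    rw [iterate_succ_apply', ih, ← hc.2.2.1 (n - (d + 1 : ℕ))]
    congr 2
    push_cast
    ring

lemma level_vp (n : ℤ) : (vp n).level = (vp 0).level + n := by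
  obtain ⟨d, rfl | rfl⟩ := Int.eq_nat_or_neg n
  · have := congrArg level (hc.iterate_parent_vp d d)
    rw [level_iterate_parent, sub_self] at this
    omega
  · have := congrArg level (hc.iterate_parent_vp d 0)
    rw [level_iterate_parent, zero_sub] at this
    omega

lemma trunc_vp {n m : ℤ} (hm : m ≤ (vp n).level) : (vp n).trunc m = vp (m - (vp 0).level) := by
  have := hc.iterate_parent_vp ((vp n).level - m).toNat n
  rw [iterate_parent_eq_trunc, Int.toNat_of_nonneg (by omega), sub_sub_cancel] at this
  rw [this, hc.level_vp]
  congr 1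
  ring

lemma exists_trunc_eq_vp (w : Vertex q) : ∃ K, ∀ m ≤ K, w.trunc m = vp (m - (vp 0).level) := by
  obtain ⟨N, hN⟩ := exists_trunc_eq_zeroVtx w
  obtain ⟨M, hM⟩ := exists_trunc_eq_zeroVtx (vp 0)
  exact ⟨min (min N M) (vp 0).level, fun m hm => by
    rw [hN m (by omega), ← hM m (by omega), hc.trunc_vp (by omega)]⟩

def toStandard (w : Vertex q) : Vertex q where
  level := w.level - (vp 0).level
  lab i := if i ≤ w.level - (vp 0).level then
      toFinQ (c (w.trunc (i + (vp 0).level - 1)) (w.trunc (i + (vp 0).level))) else 0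
  zero_gt i hi := by simp [show ¬ i ≤ w.level - (vp 0).level by omega]
  bdd := by
    obtain ⟨K, hK⟩ := hc.exists_trunc_eq_vp w
    refine ⟨min (K - (vp 0).level) (w.level - (vp 0).level), fun i hi => ?_⟩
    rw [if_pos (by omega), hK _ (by omega), hK _ (by omega), add_sub_cancel_right,
      show i + (vp 0).level - 1 - (vp 0).level = i - 1 by ring, hc.toFinQ_label_vp_sub_one]
    rfl

lemma toStandard_level (w : Vertex q) : (hc.toStandard w).level = w.level - (vp 0).level := rfl

lemma toStandard_lab (w : Vertex q) (i : ℤ) : (hc.toStandard w).lab i =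
    if i ≤ w.level - (vp 0).level then
      toFinQ (c (w.trunc (i + (vp 0).level - 1)) (w.trunc (i + (vp 0).level))) else 0 := rfl

lemma toStandard_parent (w : Vertex q) : hc.toStandard w.parent = (hc.toStandard w).parent := by
  refine Vertex.ext (by simp only [toStandard_level, level_parent]; ring) (funext fun i => ?_)
  rw [lab_parent, toStandard_lab, toStandard_lab, toStandard_level, level_parent]
  by_cases hi : i ≤ w.level - 1 - (vp 0).level
  · rw [if_pos hi, if_neg (by omega), if_pos (by omega), trunc_parent _ (by omega),
      trunc_parent _ (by omega)]
  · rw [if_neg hi, if_pos (by omega)]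

lemma toStandard_of_parent_eq {v w : Vertex q} (h : w.parent = v) :
    hc.toStandard w = (hc.toStandard v).child (toFinQ (c v w)) := by
  have hlevel := level_eq_of_parent_eq h
  refine (eq_child_of_parent_eq (by rw [← hc.toStandard_parent, h])).trans (congrArg _ ?_)
  simp only [toStandard]
  rw [if_pos (by omega), show v.level - (vp 0).level + 1 + (vp 0).level - 1 = w.level - 1 by omega,
    show v.level - (vp 0).level + 1 + (vp 0).level = w.level by omega, trunc_level_sub_one,
    trunc_level, h]

lemma toStandard_vp (n : ℤ) : hc.toStandard (vp n) = zeroVtx q n := by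
  have hlevel := hc.level_vp n
  refine Vertex.ext (by simp [toStandard, zeroVtx]; omega) (funext fun i => ?_)
  simp only [toStandard, zeroVtx]
  split_ifs with hi
  · rw [hc.trunc_vp (by omega), hc.trunc_vp (by omega), add_sub_cancel_right,
      show i + (vp 0).level - 1 - (vp 0).level = i - 1 by ring]
    exact hc.toFinQ_label_vp_sub_one i
  · rfl

lemma bijective_toStandard : Bijective hc.toStandard := by
  refine bijective_of_semiconj_parent hc.toStandard_parent (t := -(vp 0).level)
    (fun v => by simp [toStandard]; ring) (fun v w w' hw hw' h => ?_) (fun v u hu => ?_)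
    (fun u => ?_)
  · rw [hc.toStandard_of_parent_eq hw, hc.toStandard_of_parent_eq hw'] at h
    exact hc.eq_of_toFinQ_eq hw hw' (child_injective _ h)
  · obtain ⟨w, hw, hwj⟩ := hc.exists_child_toFinQ_eq v (u.lab ((hc.toStandard v).level + 1))
    exact ⟨w, hw, by rw [hc.toStandard_of_parent_eq hw, hwj, ← eq_child_of_parent_eq hu]⟩
  · obtain ⟨N, hN⟩ := exists_trunc_eq_zeroVtx u
    refine ⟨(u.level - min N u.level).toNat, vp (min N u.level), ?_⟩
    rw [hc.toStandard_vp, iterate_parent_eq_trunc, Int.toNat_of_nonneg (by omega), sub_sub_cancel,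
      hN _ (min_le_left _ _)]

lemma stdLabel_toStandard (v w : Vertex q) (h : w.parent = v ∨ w = v.parent) :
    stdLabel q (hc.toStandard v) (hc.toStandard w) = c v w := by
  rcases h with h | rfl
  · rw [hc.toStandard_of_parent_eq h, stdLabel_child]
    exact Fin.ext (by simp [toFinQ_val (hc.val_lt_of_parent_eq h)])
  · rw [hc.toStandard_parent, stdLabel_parent]
    exact Fin.ext (by simp [hc.2.1 v])

end IsPLabelling

end Scale

open Scale in
theorem statement_7_general (q : ℕ) [NeZero q]
    (P : Subgroup (Equiv.Perm (Vertex q))) (hP : IsScaleGroup P)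
    (c : Vertex q → Vertex q → Fin (q + 1)) (vp : ℤ → Vertex q)
    (hc : IsPLabelling P c vp) :
    ∃ φ : Equiv.Perm (Vertex q), φ ∈ IsomOmega q ∧
      (∀ n : ℤ, φ (vp n) = zeroVtx q n) ∧
      (∀ v w : Vertex q, Vertex.parent w = v →
        ∃ j : Fin q, (j : ℕ) = (c v w : ℕ) ∧ φ w = Vertex.child (φ v) j) ∧
      IsScaleGroup (P.map (MulAut.conj φ).toMonoidHom) ∧
      IsPLabelling (P.map (MulAut.conj φ).toMonoidHom) (stdLabel q)
        (fun n => zeroVtx q n) := by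
  let φ := Equiv.ofBijective _ hc.bijective_toStandard
  have hφ : φ ∈ IsomOmega q := hc.toStandard_parent
  have hφvp : ∀ n, φ (vp n) = zeroVtx q n := hc.toStandard_vp
  refine ⟨φ, hφ, hφvp, fun v w h => ⟨toFinQ (c v w), toFinQ_val (hc.val_lt_of_parent_eq h),
    hc.toStandard_of_parent_eq h⟩, hP.map_conj hφ, ?_⟩
  simpa only [hφvp] using hc.map_conj hP.1 hφ hc.stdLabel_toStandard

open Scale in
/-- Every `P`-labelling is conjugate to the standard labelling: there is an
automorphism `φ` fixing `ω`, sending the distinguished path to the zero path and the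
labelling to the standard one, and `φPφ⁻¹` is a scale group for which the standard
labelling is a `P`-labelling. -/
theorem statement_7 (q : ℕ) [NeZero q] (hq : 2 ≤ q)
    (P : Subgroup (Equiv.Perm (Vertex q))) (hP : IsScaleGroup P)
    (c : Vertex q → Vertex q → Fin (q + 1)) (vp : ℤ → Vertex q)
    (hc : IsPLabelling P c vp) :
    ∃ φ : Equiv.Perm (Vertex q), φ ∈ IsomOmega q ∧
      (∀ n : ℤ, φ (vp n) = zeroVtx q n) ∧
      (∀ v w : Vertex q, Vertex.parent w = v →
        ∃ j : Fin q, (j : ℕ) = (c v w : ℕ) ∧ φ w = Vertex.child (φ v) j) ∧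
      IsScaleGroup (P.map (MulAut.conj φ).toMonoidHom) ∧
      IsPLabelling (P.map (MulAut.conj φ).toMonoidHom) (stdLabel q)
        (fun n => zeroVtx q n) :=
  statement_7_general q P hP c vp hc
end

section
/- Let G be a group, y ∈ G, and let V, W be subgroups of G such that yWy⁻¹ is a proper subgroup of W and there exist m, n ∈ ℤ with yᵐVy⁻ᵐ ≤ W and W ≤ yⁿVy⁻ⁿ. Then there exists l ∈ ℤ such that yVy⁻¹ ≤ y^l W y^{−l} and V is not contained in y^l W y^{−l}. -/
/-! Conjugation by `y` is an order automorphism of the subgroup lattice, so `k ↦ yᵏWy⁻ᵏ` is a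
strictly decreasing chain. The hypotheses say that `V` lies in some member of the chain and
that the members containing `V` are bounded in index, so there is a greatest `k` with
`V ≤ yᵏWy⁻ᵏ`; then `l = k + 1` works. -/

namespace Scale

variable {G : Type*} [Group G]

theorem conjSub_one (V : Subgroup G) : conjSub 1 V = V := by
  ext
  simp [conjSub]

theorem conjSub_mul (a b : G) (V : Subgroup G) :
    conjSub (a * b) V = conjSub a (conjSub b V) := by
  rw [conjSub, conjSub, conjSub, Subgroup.map_map, map_mul]
  rfl

theorem conjSub_le_iff {a : G} {V U : Subgroup G} : conjSub a V ≤ U ↔ V ≤ conjSub a⁻¹ U := by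
  rw [conjSub, conjSub, Subgroup.map_le_iff_le_comap, Subgroup.comap_equiv_eq_map_symm',
    map_inv]
  rfl

theorem conjSub_mono (a : G) : Monotone (conjSub a) :=
  fun _ _ => Subgroup.map_mono

theorem conjSub_le_conjSub_iff {a : G} {V W : Subgroup G} :
    conjSub a V ≤ conjSub a W ↔ V ≤ W := by
  rw [conjSub_le_iff, ← conjSub_mul, inv_mul_cancel, conjSub_one]

theorem conjSub_strictMono (a : G) : StrictMono (conjSub a) :=
  (OrderEmbedding.ofMapLEIff (conjSub a) fun _ _ => conjSub_le_conjSub_iff).strictMono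

theorem strictAnti_conjSub_zpow {y : G} {W : Subgroup G} (hW : conjSub y W < W) :
    StrictAnti fun k : ℤ => conjSub (y ^ k) W :=
  strictAnti_int_of_succ_lt fun k => by
    simpa only [zpow_add_one, conjSub_mul] using conjSub_strictMono (y ^ k) hW

end Scale

open Scale in
/-- If `yWy⁻¹ < W` and `V`, `W` are commensurate along conjugation by `y`,
then some conjugate `yˡWy⁻ˡ` contains `yVy⁻¹` but not `V`. -/
theorem statement_15 {G : Type*} [Group G] (y : G) (V W : Subgroup G)
    (hW : conjSub y W < W)
    (hm : ∃ m : ℤ, conjSub (y ^ m) V ≤ W)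
    (hn : ∃ n : ℤ, W ≤ conjSub (y ^ n) V) :
    ∃ l : ℤ, conjSub y V ≤ conjSub (y ^ l) W ∧ ¬ V ≤ conjSub (y ^ l) W := by
  obtain ⟨m, hm⟩ := hm
  obtain ⟨n, hn⟩ := hn
  set f : ℤ → Subgroup G := fun k => conjSub (y ^ k) W with hf_def
  have hf : StrictAnti f := strictAnti_conjSub_zpow hW
  have hV : V ≤ f (-m) := by
    simpa only [conjSub_le_iff, ← zpow_neg] using hm
  have hbdd : ∀ k, V ≤ f k → k ≤ -n := fun k hk => by
    have h : f 0 ≤ f (n + k) := calc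
      f 0 = W := by simp only [hf_def, zpow_zero, conjSub_one]
      _ ≤ conjSub (y ^ n) V := hn
      _ ≤ conjSub (y ^ n) (f k) := conjSub_mono _ hk
      _ = f (n + k) := by simp only [hf_def, zpow_add, conjSub_mul]
    linarith [hf.le_iff_ge.1 h]
  obtain ⟨k, hk, hmax⟩ := Int.exists_greatest_of_bdd ⟨-n, hbdd⟩ ⟨-m, hV⟩
  refine ⟨k + 1, ?_, fun h => by linarith [hmax _ h]⟩
  rw [conjSub_le_iff, ← conjSub_mul, ← zpow_neg_one, ← zpow_add, show -1 + (k + 1) = k by ring]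
  exact hk
end
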